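/- Let δ > 0 and f : (0,δ) → ℝ be continuous. Suppose that for every ε ∈ (0,δ], the restriction of f to (0,ε) is not strictly monotone. Then there exists a sequence (t_k) in (0,δ) with t_k → 0 such that each t_k is a local maximum point of f. -/
import Mathlib

open Set

/-- A continuous function on `Ioo 0 ε` that is injective is strictly monotone or antitone. -/
lemma aux_mono_of_inj {ε : ℝ} (hε : 0 < ε) {f : ℝ → ℝ}
    (hf : ContinuousOn f (Ioo 0 ε)) (hi : InjOn f (Ioo 0 ε)) :
    StrictMonoOn f (Ioo 0 ε) ∨ StrictAntiOn f (Ioo 0 ε) := by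
  have hc : (ε/3 : ℝ) ∈ Ioo 0 ε := ⟨by linarith, by linarith⟩
  have hd : (2*ε/3 : ℝ) ∈ Ioo 0 ε := ⟨by linarith, by linarith⟩
  have hcd : (ε/3 : ℝ) < 2*ε/3 := by linarith
  have hIcc : Icc (ε/3) (2*ε/3) ⊆ Ioo 0 ε := fun x hx => ⟨by nlinarith [hx.1], by nlinarith [hx.2]⟩
  have hsmall := ContinuousOn.strictMonoOn_of_injOn_Icc' hcd.le (hf.mono hIcc) (hi.mono hIcc)
  -- key: for any x < y in Ioo 0 ε, f is strictly monotone (resp. anti) on a big Icc containing all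
  have key : ∀ x ∈ Ioo 0 ε, ∀ y ∈ Ioo 0 ε,
      StrictMonoOn f (Icc (min x (ε/3)) (max y (2*ε/3))) ∨
      StrictAntiOn f (Icc (min x (ε/3)) (max y (2*ε/3))) := by
    intro x hx y hy
    have hsub : Icc (min x (ε/3)) (max y (2*ε/3)) ⊆ Ioo 0 ε := fun z hz =>
      ⟨lt_of_lt_of_le (lt_min hx.1 hc.1) hz.1, lt_of_le_of_lt hz.2 (max_lt hy.2 hd.2)⟩
    exact ContinuousOn.strictMonoOn_of_injOn_Icc'
      (le_trans (min_le_right _ _) (le_trans hcd.le (le_max_right _ _)))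
      (hf.mono hsub) (hi.mono hsub)
  rcases hsmall with hm | ha
  · left
    intro x hx y hy hxy
    have hsub : Icc (ε/3) (2*ε/3) ⊆ Icc (min x (ε/3)) (max y (2*ε/3)) :=
      Icc_subset_Icc (min_le_right _ _) (le_max_right _ _)
    rcases key x hx y hy with h | h
    · exact h ⟨min_le_left _ _, le_trans hxy.le (le_max_left _ _)⟩
        ⟨le_trans (min_le_left _ _) hxy.le, le_max_left _ _⟩ hxy
    · exfalso
      exact absurd (hm ⟨le_refl _, hcd.le⟩ ⟨hcd.le, le_refl _⟩ hcd)
        (not_lt.2 (h (hsub ⟨le_refl _, hcd.le⟩) (hsub ⟨hcd.le, le_refl _⟩) hcd).le)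
  · right
    intro x hx y hy hxy
    have hsub : Icc (ε/3) (2*ε/3) ⊆ Icc (min x (ε/3)) (max y (2*ε/3)) :=
      Icc_subset_Icc (min_le_right _ _) (le_max_right _ _)
    rcases key x hx y hy with h | h
    · exfalso
      exact absurd (ha ⟨le_refl _, hcd.le⟩ ⟨hcd.le, le_refl _⟩ hcd)
        (not_lt.2 (h (hsub ⟨le_refl _, hcd.le⟩) (hsub ⟨hcd.le, le_refl _⟩) hcd).le)
    · exact h ⟨min_le_left _ _, le_trans hxy.le (le_max_left _ _)⟩
        ⟨le_trans (min_le_left _ _) hxy.le, le_max_left _ _⟩ hxy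

/-- Non-injectivity: get an ordered pair with equal values. -/
lemma aux_pair {δ ε : ℝ} (hδ : 0 < δ) (hε : 0 < ε) (hεδ : ε ≤ δ) {f : ℝ → ℝ}
    (hf : ContinuousOn f (Set.Ioo 0 δ))
    (hmono : ¬ (StrictMonoOn f (Set.Ioo 0 ε) ∨ StrictAntiOn f (Set.Ioo 0 ε))) :
    ∃ a ∈ Ioo (0:ℝ) ε, ∃ b ∈ Ioo (0:ℝ) ε, a < b ∧ f a = f b := by
  have hf' : ContinuousOn f (Ioo 0 ε) := hf.mono (Ioo_subset_Ioo le_rfl hεδ)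
  have : ¬ InjOn f (Ioo 0 ε) := fun hi => hmono (aux_mono_of_inj hε hf' hi)
  rw [InjOn] at this
  push_neg at this
  obtain ⟨a, ha, b, hb, hfab, hne⟩ := this
  rcases lt_or_gt_of_ne hne with h | h
  · exact ⟨a, ha, b, hb, h, hfab⟩
  · exact ⟨b, hb, a, ha, h, hfab.symm⟩

/-- Key: a local max point in every (0, ε). -/
lemma aux_locmax (δ : ℝ) (hδ : 0 < δ) (f : ℝ → ℝ)
    (hf : ContinuousOn f (Set.Ioo 0 δ))
    (hmono : ∀ ε : ℝ, 0 < ε → ε ≤ δ →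
      ¬ (StrictMonoOn f (Set.Ioo 0 ε) ∨ StrictAntiOn f (Set.Ioo 0 ε)))
    (ε : ℝ) (hε : 0 < ε) (hεδ : ε ≤ δ) :
    ∃ t ∈ Ioo (0:ℝ) ε, ∃ η > 0, Set.Ioo (t - η) (t + η) ⊆ Set.Ioo 0 δ ∧
      ∀ s ∈ Set.Ioo (t - η) (t + η), f s ≤ f t := by
  obtain ⟨a, ha, b, hb, hab, hfab⟩ := aux_pair hδ hε hεδ hf (hmono ε hε hεδ)
  obtain ⟨p, hp, q, hq, hpq, hfpq⟩ := aux_pair hδ ha.1 (le_trans ha.2.le hεδ) hf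
    (hmono a ha.1 (le_trans ha.2.le hεδ))
  -- p < q < a < b, all in (0, ε)
  have hqa : q < a := hq.2
  have hpb : p < b := lt_trans (lt_trans hpq hqa) hab
  have hsub : Icc p b ⊆ Ioo 0 δ := fun x hx =>
    ⟨lt_of_lt_of_le hp.1 hx.1, lt_of_le_of_lt hx.2 (lt_of_lt_of_le hb.2 hεδ)⟩
  obtain ⟨t₀, ht₀, hmax⟩ := isCompact_Icc.exists_isMaxOn (nonempty_Icc.2 hpb.le)
    (hf.mono hsub)
  rw [isMaxOn_iff] at hmax
  -- replace t₀ by an interior maximizer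
  have main : ∃ t ∈ Ioo p b, ∀ s ∈ Icc p b, f s ≤ f t := by
    rcases eq_or_lt_of_le ht₀.1 with h1 | h1
    · -- t₀ = p, use q
      refine ⟨q, ⟨lt_of_lt_of_le hpq le_rfl, lt_trans hqa hab⟩, fun s hs => ?_⟩
      have := hmax s hs
      rw [← h1, hfpq] at this
      exact this
    · rcases eq_or_lt_of_le ht₀.2 with h2 | h2
      · -- t₀ = b, use a
        refine ⟨a, ⟨lt_trans hpq hqa, hab⟩, fun s hs => ?_⟩
        have := hmax s hs
        rw [h2, ← hfab] at this
        exact this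
      · exact ⟨t₀, ⟨h1, h2⟩, hmax⟩
  obtain ⟨t, ht, hmax'⟩ := main
  refine ⟨t, ⟨lt_of_le_of_lt hp.1.le (lt_of_le_of_lt (le_refl p) ht.1),
    lt_of_lt_of_le ht.2 hb.2.le⟩, min (t - p) (b - t), by
      simp only [lt_min_iff, sub_pos]; exact ⟨ht.1, ht.2⟩, ?_, ?_⟩
  · intro s hs
    have h1 : p ≤ t - min (t - p) (b - t) := by
      have := min_le_left (t - p) (b - t); linarith
    have h2 : t + min (t - p) (b - t) ≤ b := by
      have := min_le_right (t - p) (b - t); linarith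
    exact hsub ⟨le_trans h1 hs.1.le, le_trans hs.2.le h2⟩
  · intro s hs
    have h1 : p ≤ t - min (t - p) (b - t) := by
      have := min_le_left (t - p) (b - t); linarith
    have h2 : t + min (t - p) (b - t) ≤ b := by
      have := min_le_right (t - p) (b - t); linarith
    exact hmax' s ⟨le_trans h1 hs.1.le, le_trans hs.2.le h2⟩

/-- If a continuous function on (0,δ) is not strictly monotone on any (0,ε),
then it has a sequence of local maximum points tending to 0. -/
theorem stmt_2 (δ : ℝ) (hδ : 0 < δ) (f : ℝ → ℝ)
    (hf : ContinuousOn f (Set.Ioo 0 δ))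
    (hmono : ∀ ε : ℝ, 0 < ε → ε ≤ δ →
      ¬ (StrictMonoOn f (Set.Ioo 0 ε) ∨ StrictAntiOn f (Set.Ioo 0 ε))) :
    ∃ t : ℕ → ℝ, (∀ k, t k ∈ Set.Ioo 0 δ) ∧
      Filter.Tendsto t Filter.atTop (nhds 0) ∧
      ∀ k, ∃ η > 0, Set.Ioo (t k - η) (t k + η) ⊆ Set.Ioo 0 δ ∧
        ∀ s ∈ Set.Ioo (t k - η) (t k + η), f s ≤ f (t k) := by
  have hε : ∀ k : ℕ, 0 < δ / (k + 1) := fun k => by positivity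
  have hεδ : ∀ k : ℕ, δ / (k + 1) ≤ δ := fun k => by
    rw [div_le_iff₀ (by positivity)]
    nlinarith [Nat.cast_nonneg (α := ℝ) k]
  choose t ht hη using fun k : ℕ => aux_locmax δ hδ f hf hmono (δ/(k+1)) (hε k) (hεδ k)
  refine ⟨t, fun k => ⟨(ht k).1, lt_of_lt_of_le (ht k).2 (hεδ k)⟩, ?_, hη⟩
  apply squeeze_zero (fun k => (ht k).1.le) (fun k => (ht k).2.le)
  have : Filter.Tendsto (fun k : ℕ => δ / (k : ℝ)) Filter.atTop (nhds 0) :=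
    tendsto_const_div_atTop_nhds_zero_nat δ
  have := this.comp (Filter.tendsto_add_atTop_nat 1)
  convert this using 2 with k
  simp [Function.comp]
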